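/- Let p be an odd prime and let n = 4p (i.e., r = 2). Define A = {1 + 4i : 0 ≤ i ≤ (p−1)/2} ∪ {1 + 4j + n/2 : 1 ≤ j ≤ (p−1)/2} and B = {1 − 4i : 0 ≤ i ≤ (p−1)/2} ∪ {1 − 4j + n/2 : 1 ≤ j ≤ (p−1)/2} as subsets of ℤ/nℤ, and let Ã = A ⊎ (−A) and B̃ = B ⊎ (−B) be multiset unions. Then the circulant multigraphs X̃ = Cay(ℤ/nℤ, Ã) and Ỹ = Cay(ℤ/nℤ, B̃) are isospectral but not isomorphic. -/

import Mathlib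

/-- Adjacency matrix of the circulant multigraph `Cay(ℤ/nℤ, S)`:
the `(u,v)` entry is the multiplicity of `v - u` in the connection multiset `S`. -/
def circulantAdj (n : ℕ) [NeZero n] (S : Multiset (ZMod n)) :
    Matrix (ZMod n) (ZMod n) ℂ :=
  Matrix.of fun u v => (S.count (v - u) : ℂ)

/-- The connection set `A = {1 + 4i : 0 ≤ i ≤ (p−1)/2} ∪ {1 + 4j + n/2 : 1 ≤ j ≤ (p−1)/2}`
in `ℤ/nℤ`, `n = 4p`. -/
def connA4 (n p : ℕ) : Finset (ZMod n) :=
  ((Finset.range ((p - 1) / 2 + 1)).image fun i => ((1 + 4 * i : ℕ) : ZMod n)) ∪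
  ((Finset.Icc 1 ((p - 1) / 2)).image fun j => ((1 + 4 * j + n / 2 : ℕ) : ZMod n))

/-- The connection set `B = {1 − 4i : 0 ≤ i ≤ (p−1)/2} ∪ {1 − 4j + n/2 : 1 ≤ j ≤ (p−1)/2}`
in `ℤ/nℤ`, `n = 4p`. -/
def connB4 (n p : ℕ) : Finset (ZMod n) :=
  ((Finset.range ((p - 1) / 2 + 1)).image fun i => (1 - (4 * i : ℕ) : ZMod n)) ∪
  ((Finset.Icc 1 ((p - 1) / 2)).image fun j =>
    (1 - (4 * j : ℕ) + (n / 2 : ℕ) : ZMod n))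

/-!
The eigenvalues of `Cay(ℤ/nℤ, S)` are `λ_k = ∑_{s ∈ S} ψ(k s)` for the standard character `ψ`.
Since `B = 2 - A`, writing `ω = ψ k` the eigenvalues of `X̃` and `Ỹ` at `k` are `E(ω) + E(ω⁻¹)`
and `ω² E(ω⁻¹) + ω⁻² E(ω)`, where `E(ω) = ∑_{a ∈ A} ω^a` is a pair of geometric series in `ω⁴`.
They coincide unless `ω^(2p) = 1 ≠ ω⁴`; then `∑_{|i| ≤ (p-1)/2} ω^(4i) = 0` shows that the second
one is the first one at `-ω = ψ(k + n/2)`, and `k ↦ k + n/2` on these `k` is an involution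
matching the two spectra.

In `Ỹ` the vertices `0` and `3` are joined both by a double edge and by the path `0, 1, 2, 3` of
simple edges. The simple edges of `X̃` have differences `±(2p - 1)`, and no sum of three of these
is the difference of a double edge, so no isomorphism can exist.
-/

open Finset Polynomial

local notation "ψ" => ZMod.stdAddChar

theorem Multiset.sum_map_eq_sum_count_mul {α : Type*} [Fintype α] [DecidableEq α]
    (S : Multiset α) (f : α → ℂ) : (S.map f).sum = ∑ d, (S.count d : ℂ) * f d := by
  rw [Finset.sum_multiset_map_count, ← Finset.sum_subset (Finset.subset_univ S.toFinset)]
  · simp only [nsmul_eq_mul]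
  · intro d _ hd
    rw [Multiset.count_eq_zero.mpr (by simpa using hd), Nat.cast_zero, zero_mul]

theorem ZMod.neg_natCast_eq_of_add_eq {n a b : ℕ} (h : a + b = n) : -(a : ZMod n) = b :=
  neg_eq_of_add_eq_zero_right (by rw [← Nat.cast_add, h, ZMod.natCast_self])

section Spectrum

variable {n : ℕ} [NeZero n]

noncomputable def circulantEigenvalue (S : Multiset (ZMod n)) (k : ZMod n) : ℂ :=
  (S.map fun s => ψ (k * s)).sum

noncomputable def dftMatrix (n : ℕ) [NeZero n] : Matrix (ZMod n) (ZMod n) ℂ :=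
  Matrix.of fun u k => ψ (u * k)

theorem circulantAdj_mul_dftMatrix (S : Multiset (ZMod n)) :
    circulantAdj n S * dftMatrix n =
      dftMatrix n * Matrix.diagonal (circulantEigenvalue S) := by
  ext u k
  rw [Matrix.mul_apply, Matrix.mul_diagonal, circulantEigenvalue,
    Multiset.sum_map_eq_sum_count_mul, Finset.mul_sum, ← Equiv.sum_comp (Equiv.addLeft u)]
  refine Finset.sum_congr rfl fun d _ => ?_
  simp only [circulantAdj, dftMatrix, Matrix.of_apply, Equiv.coe_addLeft, add_sub_cancel_left,
    add_mul, AddChar.map_add_eq_mul, mul_comm d k]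
  ring

theorem dftMatrix_mul_conj :
    dftMatrix n * Matrix.of (fun k w => ψ (-(k * w))) = (n : ℂ) • 1 := by
  ext u w
  have h := AddChar.sum_mulShift (u - w) (ZMod.isPrimitive_stdAddChar n)
  simp only [ZMod.card, sub_eq_zero] at h
  simp only [Matrix.mul_apply, dftMatrix, Matrix.of_apply, ← AddChar.map_add_eq_mul,
    Matrix.smul_apply, Matrix.one_apply, smul_eq_mul, mul_ite, mul_one, mul_zero]
  rw [← Nat.cast_zero, ← Nat.cast_ite, ← h]
  exact Finset.sum_congr rfl fun k _ => by ring_nf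

theorem charpoly_circulantAdj (S : Multiset (ZMod n)) :
    (circulantAdj n S).charpoly = ∏ k, (X - C (circulantEigenvalue S k)) := by
  set G := (n : ℂ)⁻¹ • Matrix.of (fun k w : ZMod n => ψ (-(k * w)))
  have hFG : dftMatrix n * G = 1 := by
    rw [Matrix.mul_smul, dftMatrix_mul_conj, smul_smul,
      inv_mul_cancel₀ (Nat.cast_ne_zero.mpr (NeZero.ne n)), one_smul]
  have hM : circulantAdj n S = dftMatrix n * Matrix.diagonal (circulantEigenvalue S) * G := by
    rw [← circulantAdj_mul_dftMatrix, Matrix.mul_assoc, hFG, Matrix.mul_one]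
  rw [hM, Matrix.charpoly_mul_comm, ← Matrix.mul_assoc, mul_eq_one_comm.mp hFG,
    Matrix.one_mul, Matrix.charpoly_diagonal]

theorem stdAddChar_pow_card (k : ZMod n) : ψ k ^ n = 1 := by
  rw [← AddChar.map_nsmul_eq_pow, nsmul_eq_mul, ZMod.natCast_self, zero_mul,
    AddChar.map_zero_eq_one]

theorem stdAddChar_half (hn : Even n) : ψ ((n / 2 : ℕ) : ZMod n) = -1 := by
  obtain ⟨m, rfl⟩ := hn
  rw [show (m + m) / 2 = m by omega]
  have hsq : ψ (m : ZMod (m + m)) ^ 2 = 1 := by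
    rw [← AddChar.map_nsmul_eq_pow, two_nsmul, ← Nat.cast_add, ZMod.natCast_self,
      AddChar.map_zero_eq_one]
  have hne : ψ (m : ZMod (m + m)) ≠ 1 := by
    rw [← (ψ : AddChar (ZMod (m + m)) ℂ).map_zero_eq_one, ZMod.injective_stdAddChar.ne_iff,
      ne_eq, ZMod.natCast_eq_zero_iff]
    have := NeZero.ne (m + m)
    exact Nat.not_dvd_of_pos_of_lt (by omega) (by omega)
  exact (sq_eq_one_iff.mp hsq).resolve_left hne

theorem stdAddChar_add_half (hn : Even n) (k : ZMod n) :
    ψ (k + ((n / 2 : ℕ) : ZMod n)) = -ψ k := by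
  rw [AddChar.map_add_eq_mul, stdAddChar_half hn, mul_neg_one]

end Spectrum

section Symmetrize

variable {n : ℕ}

def symmetrize (S : Finset (ZMod n)) : Multiset (ZMod n) := S.val + S.val.map fun a => -a

theorem count_symmetrize (S : Finset (ZMod n)) (d : ZMod n) :
    (symmetrize S).count d = (if d ∈ S then 1 else 0) + (if -d ∈ S then 1 else 0) := by
  rw [symmetrize, Multiset.count_add, ← neg_neg d, Multiset.count_map_eq_count' _ _ neg_injective,
    neg_neg, Multiset.count_eq_of_nodup S.nodup, Multiset.count_eq_of_nodup S.nodup]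
  rfl

theorem count_symmetrize_ne_two {S : Finset (ZMod n)} {d : ZMod n} (h : d ∉ S ∨ -d ∉ S) :
    (symmetrize S).count d ≠ 2 := by
  rw [count_symmetrize]
  split_ifs <;> simp_all

variable [NeZero n]

theorem circulantEigenvalue_symmetrize (S : Finset (ZMod n)) (k : ZMod n) :
    circulantEigenvalue (symmetrize S) k =
      circulantEigenvalue S.val k + circulantEigenvalue S.val (-k) := by
  simp only [circulantEigenvalue, symmetrize, Multiset.map_add, Multiset.sum_add,
    Multiset.map_map, Function.comp_def, mul_neg, neg_mul]

theorem circulantEigenvalue_image_sub (S : Finset (ZMod n)) (c k : ZMod n) :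
    circulantEigenvalue (S.image (c - ·)).val k = ψ (k * c) * circulantEigenvalue S.val (-k) := by
  change ∑ x ∈ S.image (c - ·), ψ (k * x) = ψ (k * c) * ∑ x ∈ S, ψ (-k * x)
  rw [Finset.sum_image fun _ _ _ _ h => sub_right_injective h, Finset.mul_sum]
  refine Finset.sum_congr rfl fun x _ => ?_
  rw [mul_sub, sub_eq_add_neg, AddChar.map_add_eq_mul, neg_mul]

theorem count_sub_eq_of_circulantAdj_eq_submatrix {S T : Multiset (ZMod n)}
    {e : Equiv.Perm (ZMod n)} (h : circulantAdj n T = (circulantAdj n S).submatrix e e)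
    (u v : ZMod n) : T.count (v - u) = S.count (e v - e u) := by
  simpa [circulantAdj] using congrFun (congrFun h u) v

/-- In `Cay(T)` the vertices `0` and `3` are joined by a double edge and by a path of three
simple edges; the hypotheses on `S` say that no two vertices of `Cay(S)` are. -/
theorem not_exists_perm_of_counts {S T : Multiset (ZMod n)} (Q : Set (ZMod n))
    (hS1 : ∀ d, S.count d = 1 → d ∈ Q) (hS2 : ∀ x ∈ Q, ∀ y ∈ Q, ∀ z ∈ Q, S.count (x + y + z) ≠ 2)
    (hT1 : T.count 1 = 1) (hT3 : T.count 3 = 2) :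
    ¬ ∃ e : Equiv.Perm (ZMod n), circulantAdj n T = (circulantAdj n S).submatrix e e := by
  rintro ⟨e, he⟩
  have hstep (u v : ZMod n) (huv : v - u = 1) : e v - e u ∈ Q :=
    hS1 _ (by rw [← count_sub_eq_of_circulantAdj_eq_submatrix he, huv, hT1])
  have h03 := count_sub_eq_of_circulantAdj_eq_submatrix he 0 3
  rw [sub_zero, hT3, show e 3 - e 0 = (e 1 - e 0) + (e 2 - e 1) + (e 3 - e 2) by ring] at h03
  exact hS2 _ (hstep 0 1 (by ring)) _ (hstep 1 2 (by ring)) _ (hstep 2 3 (by ring)) h03.symm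

end Symmetrize

theorem geom_sum_add_geom_sum_inv {K : Type*} [Field K] {z : K} {t : ℕ} (hz : z ≠ 1)
    (hzt : z ^ (2 * t + 1) = 1) :
    ∑ i ∈ range (t + 1), z ^ i + ∑ i ∈ range (t + 1), z⁻¹ ^ i = 1 := by
  have hz0 : z ≠ 0 := by rintro rfl; simp at hzt
  have hzinv : z⁻¹ ^ (t + 1) = z ^ t := by
    rw [inv_pow, inv_eq_of_mul_eq_one_right]
    rw [← pow_add, show t + 1 + t = 2 * t + 1 by ring, hzt]
  rw [geom_sum_eq hz, geom_sum_eq (inv_ne_one.mpr hz), hzinv]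
  have h1 : z - 1 ≠ 0 := sub_ne_zero.mpr hz
  have h2 : z⁻¹ - 1 ≠ 0 := sub_ne_zero.mpr (inv_ne_one.mpr hz)
  field_simp
  ring

/-- `∑_{a ∈ A} ω^a` for `p = 2t + 1`, summed as two geometric series in `ω⁴`. -/
noncomputable def connA4Eigenvalue (t : ℕ) (ω : ℂ) : ℂ :=
  ω * (∑ i ∈ range (t + 1), (ω ^ 4) ^ i +
    ω ^ (2 * (2 * t + 1)) * (∑ i ∈ range (t + 1), (ω ^ 4) ^ i - 1))

noncomputable def connA4SymEigenvalue (t : ℕ) (ω : ℂ) : ℂ :=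
  connA4Eigenvalue t ω + connA4Eigenvalue t ω⁻¹

noncomputable def connB4SymEigenvalue (t : ℕ) (ω : ℂ) : ℂ :=
  ω ^ 2 * connA4Eigenvalue t ω⁻¹ + ω⁻¹ ^ 2 * connA4Eigenvalue t ω

section Eigenvalue

variable {t : ℕ} {ω : ℂ}

theorem connA4Eigenvalue_neg : connA4Eigenvalue t (-ω) = -connA4Eigenvalue t ω := by
  simp only [connA4Eigenvalue, (by decide : Even 4).neg_pow,
    (even_two_mul (2 * t + 1)).neg_pow, neg_mul]

theorem connB4SymEigenvalue_eq_of_not (hω : ω ^ (4 * (2 * t + 1)) = 1)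
    (h : ¬ (ω ^ (2 * (2 * t + 1)) = 1 ∧ ω ^ 4 ≠ 1)) :
    connB4SymEigenvalue t ω = connA4SymEigenvalue t ω := by
  have hω0 : ω ≠ 0 := by rintro rfl; simp at hω
  have hε : (ω ^ (2 * (2 * t + 1))) ^ 2 = 1 := by rw [← pow_mul, ← hω]; ring
  simp only [connB4SymEigenvalue, connA4SymEigenvalue, connA4Eigenvalue]
  rw [inv_pow ω 4, inv_pow ω (2 * (2 * t + 1))]
  rcases sq_eq_one_iff.mp hε with hε | hε
  · rw [show ω ^ 4 = 1 by tauto, hε, inv_one]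
    field_simp
  · rw [hε]
    generalize ∑ i ∈ range (t + 1), (ω ^ 4) ^ i = G
    generalize ∑ i ∈ range (t + 1), (ω ^ 4)⁻¹ ^ i = G'
    field_simp
    ring

theorem connB4SymEigenvalue_eq_of_cond (hω : ω ^ (4 * (2 * t + 1)) = 1)
    (h : ω ^ (2 * (2 * t + 1)) = 1 ∧ ω ^ 4 ≠ 1) :
    connB4SymEigenvalue t ω = connA4SymEigenvalue t (-ω) := by
  have hω0 : ω ≠ 0 := by rintro rfl; simp at hω
  have hz : (ω ^ 4) ^ (2 * t + 1) = 1 := by rw [← pow_mul, hω]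
  have hG := geom_sum_add_geom_sum_inv h.2 hz
  rw [connA4SymEigenvalue, inv_neg, connA4Eigenvalue_neg, connA4Eigenvalue_neg]
  simp only [connB4SymEigenvalue, connA4Eigenvalue]
  rw [inv_pow ω 4, inv_pow ω (2 * (2 * t + 1)), h.1, inv_one]
  generalize ∑ i ∈ range (t + 1), (ω ^ 4) ^ i = G at hG ⊢
  generalize ∑ i ∈ range (t + 1), (ω ^ 4)⁻¹ ^ i = G' at hG ⊢
  field_simp
  linear_combination (2 * (ω ^ 2 + 1)) * hG

end Eigenvalue

def connA4Nat (n p : ℕ) : Finset ℕ :=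
  ((range ((p - 1) / 2 + 1)).image fun i => 1 + 4 * i) ∪
  ((Icc 1 ((p - 1) / 2)).image fun j => 1 + 4 * j + n / 2)

theorem connA4_eq_image_natCast (n p : ℕ) : connA4 n p = (connA4Nat n p).image Nat.cast := by
  rw [connA4Nat, image_union, image_image, image_image]
  rfl

theorem connB4_eq_image_sub {n : ℕ} (p : ℕ) (hn : Even n) :
    connB4 n p = (connA4 n p).image (2 - ·) := by
  have hhalf : ((n / 2 : ℕ) : ZMod n) + ((n / 2 : ℕ) : ZMod n) = 0 := by
    rw [← Nat.cast_add, ← two_mul, Nat.mul_div_cancel' (even_iff_two_dvd.mp hn),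
      ZMod.natCast_self]
  rw [connB4, connA4, image_union, image_image, image_image]
  congr 1 <;> refine image_congr fun i _ => ?_ <;> simp only [Function.comp_apply] <;> push_cast
  · ring
  · linear_combination hhalf

theorem mem_connB4 {n : ℕ} (p : ℕ) (hn : Even n) (d : ZMod n) :
    d ∈ connB4 n p ↔ 2 - d ∈ connA4 n p := by
  rw [connB4_eq_image_sub p hn, mem_image]
  exact ⟨fun ⟨a, ha, had⟩ => by rwa [← had, sub_sub_cancel], fun h => ⟨2 - d, h, sub_sub_cancel _ _⟩⟩

section Construction

variable {t n : ℕ}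

theorem mem_connA4Nat (hn : n = 4 * (2 * t + 1)) (m : ℕ) :
    m ∈ connA4Nat n (2 * t + 1) ↔
      (m % 4 = 1 ∧ m ≤ 4 * t + 1) ∨ (m % 4 = 3 ∧ 4 * t + 7 ≤ m ∧ m ≤ 8 * t + 3) := by
  have hq : (2 * t + 1 - 1) / 2 = t := by omega
  have hhalf : n / 2 = 4 * t + 2 := by omega
  simp only [connA4Nat, hq, hhalf, mem_union, mem_image, mem_range, mem_Icc]
  constructor
  · rintro (⟨i, hi, rfl⟩ | ⟨j, hj, rfl⟩) <;> omega
  · rintro (h | h)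
    · exact Or.inl ⟨m / 4, by omega, by omega⟩
    · exact Or.inr ⟨(m - (4 * t + 3)) / 4, by omega, by omega⟩

theorem sum_connA4Nat_pow (hn : n = 4 * (2 * t + 1)) (ω : ℂ) :
    ∑ m ∈ connA4Nat n (2 * t + 1), ω ^ m = connA4Eigenvalue t ω := by
  have hq : (2 * t + 1 - 1) / 2 = t := by omega
  have hhalf : n / 2 = 2 * (2 * t + 1) := by omega
  have hIcc (f : ℕ → ℂ) : ∑ j ∈ Icc 1 t, f j = ∑ i ∈ range (t + 1), f i - f 0 := by
    rw [sum_range_eq_add_Ico _ (by omega : 0 < t + 1), Ico_add_one_right_eq_Icc]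
    ring
  rw [connA4Nat, hq, hhalf, sum_union, sum_image, sum_image, hIcc, connA4Eigenvalue]
  · simp only [pow_add, pow_one, pow_mul, ← mul_sum, ← sum_mul, mul_zero, pow_zero]
    ring
  · intro a _ b _ hab
    simpa using hab
  · intro a _ b _ hab
    simpa using hab
  · rw [disjoint_left]
    simp only [mem_image, mem_range, mem_Icc]
    rintro _ ⟨i, hi, rfl⟩ ⟨j, hj, hij⟩
    omega

variable [NeZero n]

theorem mem_connA4 (hn : n = 4 * (2 * t + 1)) (d : ZMod n) :
    d ∈ connA4 n (2 * t + 1) ↔ (d.val % 4 = 1 ∧ d.val ≤ 4 * t + 1) ∨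
      (d.val % 4 = 3 ∧ 4 * t + 7 ≤ d.val ∧ d.val ≤ 8 * t + 3) := by
  rw [connA4_eq_image_natCast, mem_image, ← mem_connA4Nat hn]
  constructor
  · rintro ⟨m, hm, rfl⟩
    rwa [ZMod.val_cast_of_lt (by have := (mem_connA4Nat hn m).mp hm; omega)]
  · exact fun h => ⟨d.val, h, ZMod.natCast_zmod_val d⟩

theorem mem_connA4_natCast (hn : n = 4 * (2 * t + 1)) {m : ℕ} (hm : m < n) :
    (m : ZMod n) ∈ connA4 n (2 * t + 1) ↔
      (m % 4 = 1 ∧ m ≤ 4 * t + 1) ∨ (m % 4 = 3 ∧ 4 * t + 7 ≤ m ∧ m ≤ 8 * t + 3) := by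
  rw [mem_connA4 hn, ZMod.val_cast_of_lt hm]

theorem circulantEigenvalue_connA4 (hn : n = 4 * (2 * t + 1)) (k : ZMod n) :
    circulantEigenvalue (connA4 n (2 * t + 1)).val k = connA4Eigenvalue t (ψ k) := by
  change ∑ x ∈ connA4 n (2 * t + 1), ψ (k * x) = _
  rw [connA4_eq_image_natCast, sum_image, ← sum_connA4Nat_pow hn]
  · simp only [mul_comm k, ← nsmul_eq_mul, AddChar.map_nsmul_eq_pow]
  · intro a ha b hb hab
    have := (mem_connA4Nat hn a).mp ha
    have := (mem_connA4Nat hn b).mp hb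
    rwa [ZMod.natCast_eq_natCast_iff', Nat.mod_eq_of_lt (by omega),
      Nat.mod_eq_of_lt (by omega)] at hab

theorem circulantEigenvalue_symmetrize_connA4 (hn : n = 4 * (2 * t + 1)) (k : ZMod n) :
    circulantEigenvalue (symmetrize (connA4 n (2 * t + 1))) k =
      connA4SymEigenvalue t (ψ k) := by
  rw [circulantEigenvalue_symmetrize, circulantEigenvalue_connA4 hn,
    circulantEigenvalue_connA4 hn, AddChar.map_neg_eq_inv, connA4SymEigenvalue]

theorem circulantEigenvalue_symmetrize_connB4 (hn : n = 4 * (2 * t + 1)) (k : ZMod n) :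
    circulantEigenvalue (symmetrize (connB4 n (2 * t + 1))) k =
      connB4SymEigenvalue t (ψ k) := by
  rw [circulantEigenvalue_symmetrize, connB4_eq_image_sub _ ⟨2 * (2 * t + 1), by omega⟩,
    circulantEigenvalue_image_sub, circulantEigenvalue_image_sub, neg_neg,
    circulantEigenvalue_connA4 hn, circulantEigenvalue_connA4 hn, mul_two, mul_two,
    AddChar.map_add_eq_mul, AddChar.map_add_eq_mul, AddChar.map_neg_eq_inv, add_comm,
    connB4SymEigenvalue]
  ring

noncomputable def spectralMatching (t n : ℕ) [NeZero n] (k : ZMod n) : ZMod n :=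
  if ψ k ^ (2 * (2 * t + 1)) = 1 ∧ ψ k ^ 4 ≠ 1 then k + ((n / 2 : ℕ) : ZMod n) else k

theorem spectralMatching_involutive (hn : n = 4 * (2 * t + 1)) :
    Function.Involutive (spectralMatching t n) := by
  have heven : Even n := ⟨2 * (2 * t + 1), by omega⟩
  intro k
  by_cases h : ψ k ^ (2 * (2 * t + 1)) = 1 ∧ ψ k ^ 4 ≠ 1
  · have h' : ψ (k + ((n / 2 : ℕ) : ZMod n)) ^ (2 * (2 * t + 1)) = 1 ∧
        ψ (k + ((n / 2 : ℕ) : ZMod n)) ^ 4 ≠ 1 := by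
      rwa [stdAddChar_add_half heven, (even_two_mul _).neg_pow, (by decide : Even 4).neg_pow]
    rw [show spectralMatching t n k = k + ((n / 2 : ℕ) : ZMod n) from if_pos h,
      spectralMatching, if_pos h', add_assoc, ← Nat.cast_add, ← two_mul,
      Nat.mul_div_cancel' (even_iff_two_dvd.mp heven), ZMod.natCast_self, add_zero]
  · rw [show spectralMatching t n k = k from if_neg h, spectralMatching, if_neg h]

theorem circulantEigenvalue_symmetrize_connA4_spectralMatching (hn : n = 4 * (2 * t + 1))
    (k : ZMod n) :
    circulantEigenvalue (symmetrize (connA4 n (2 * t + 1))) (spectralMatching t n k) =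
      circulantEigenvalue (symmetrize (connB4 n (2 * t + 1))) k := by
  have hω : ψ k ^ (4 * (2 * t + 1)) = 1 := hn ▸ stdAddChar_pow_card k
  rw [circulantEigenvalue_symmetrize_connA4 hn, circulantEigenvalue_symmetrize_connB4 hn,
    spectralMatching]
  split_ifs with h
  · rw [stdAddChar_add_half ⟨2 * (2 * t + 1), by omega⟩, connB4SymEigenvalue_eq_of_cond hω h]
  · rw [connB4SymEigenvalue_eq_of_not hω h]

theorem charpoly_symmetrize_connA4_eq_connB4 (hn : n = 4 * (2 * t + 1)) :
    (circulantAdj n (symmetrize (connA4 n (2 * t + 1)))).charpoly =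
      (circulantAdj n (symmetrize (connB4 n (2 * t + 1)))).charpoly := by
  rw [charpoly_circulantAdj, charpoly_circulantAdj,
    ← Equiv.prod_comp (spectralMatching_involutive hn).toPerm]
  exact Finset.prod_congr rfl fun k _ => by
    rw [Function.Involutive.coe_toPerm, circulantEigenvalue_symmetrize_connA4_spectralMatching hn]

theorem eq_or_eq_neg_of_count_symmetrize_connA4_eq_one (hn : n = 4 * (2 * t + 1)) (d : ZMod n)
    (hd : (symmetrize (connA4 n (2 * t + 1))).count d = 1) :
    d = ((4 * t + 1 : ℕ) : ZMod n) ∨ d = -((4 * t + 1 : ℕ) : ZMod n) := by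
  rw [ZMod.neg_natCast_eq_of_add_eq (b := 4 * t + 3) (by omega)]
  have hneg : d.val = 0 ∧ (-d).val = 0 ∨ (-d).val = n - d.val := by
    rw [ZMod.neg_val]
    split_ifs with h0
    · exact Or.inl ⟨by rw [h0, ZMod.val_zero], rfl⟩
    · exact Or.inr rfl
  have := d.val_lt
  rw [count_symmetrize] at hd
  simp only [mem_connA4 hn] at hd
  have hv : d.val = 4 * t + 1 ∨ d.val = 4 * t + 3 := by split_ifs at hd <;> omega
  rcases hv with hv | hv <;> rw [← ZMod.natCast_zmod_val d, hv] <;> simp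

theorem count_symmetrize_connA4_ne_two (ht : 1 ≤ t) (hn : n = 4 * (2 * t + 1)) :
    ∀ x ∈ ({((4 * t + 1 : ℕ) : ZMod n), -((4 * t + 1 : ℕ) : ZMod n)} : Set (ZMod n)),
    ∀ y ∈ ({((4 * t + 1 : ℕ) : ZMod n), -((4 * t + 1 : ℕ) : ZMod n)} : Set (ZMod n)),
    ∀ z ∈ ({((4 * t + 1 : ℕ) : ZMod n), -((4 * t + 1 : ℕ) : ZMod n)} : Set (ZMod n)),
      (symmetrize (connA4 n (2 * t + 1))).count (x + y + z) ≠ 2 := by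
  set g : ZMod n := ((4 * t + 1 : ℕ) : ZMod n)
  have hg : -g ∉ connA4 n (2 * t + 1) := by
    rw [ZMod.neg_natCast_eq_of_add_eq (b := 4 * t + 3) (by omega),
      mem_connA4_natCast hn (by omega)]
    omega
  have h3g : 3 * g ∉ connA4 n (2 * t + 1) := by
    rw [show 3 * g = ((4 * t - 1 : ℕ) : ZMod n) by
      rw [← Nat.cast_ofNat, ← Nat.cast_mul, show 3 * (4 * t + 1) = (4 * t - 1) + n by omega,
        Nat.cast_add, ZMod.natCast_self, add_zero]]
    rw [mem_connA4_natCast hn (by omega)]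
    omega
  have key : ∀ d, d = g ∨ d = -g ∨ d = 3 * g ∨ d = -(3 * g) →
      (symmetrize (connA4 n (2 * t + 1))).count d ≠ 2 := by
    rintro d (rfl | rfl | rfl | rfl) <;> apply count_symmetrize_ne_two <;> simp [hg, h3g]
  simp only [Set.mem_insert_iff, Set.mem_singleton_iff]
  rintro x (rfl | rfl) y (rfl | rfl) z (rfl | rfl) <;> apply key <;> ring_nf <;> simp

theorem count_symmetrize_connB4 (ht : 1 ≤ t) (hn : n = 4 * (2 * t + 1)) :
    (symmetrize (connB4 n (2 * t + 1))).count 1 = 1 ∧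
      (symmetrize (connB4 n (2 * t + 1))).count 3 = 2 := by
  have heven : Even n := ⟨2 * (2 * t + 1), by omega⟩
  simp only [count_symmetrize, mem_connB4 _ heven]
  rw [show (2 : ZMod n) - 1 = ((1 : ℕ) : ZMod n) by push_cast; ring,
    show (2 : ZMod n) - -1 = ((3 : ℕ) : ZMod n) by push_cast; ring,
    show (2 : ZMod n) - 3 = ((n - 1 : ℕ) : ZMod n) by
      rw [Nat.cast_sub (by omega), ZMod.natCast_self]; ring,
    show (2 : ZMod n) - -3 = ((5 : ℕ) : ZMod n) by push_cast; ring]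
  simp only [mem_connA4_natCast hn (by omega : 1 < n), mem_connA4_natCast hn (by omega : 3 < n),
    mem_connA4_natCast hn (by omega : n - 1 < n), mem_connA4_natCast hn (by omega : 5 < n),
    true_and]
  constructor <;> split_ifs <;> omega

theorem not_exists_perm_symmetrize_connB4_connA4 (ht : 1 ≤ t) (hn : n = 4 * (2 * t + 1)) :
    ¬ ∃ e : Equiv.Perm (ZMod n), circulantAdj n (symmetrize (connB4 n (2 * t + 1))) =
      (circulantAdj n (symmetrize (connA4 n (2 * t + 1)))).submatrix e e :=
  not_exists_perm_of_counts _ (eq_or_eq_neg_of_count_symmetrize_connA4_eq_one hn)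
    (count_symmetrize_connA4_ne_two ht hn) (count_symmetrize_connB4 ht hn).1
    (count_symmetrize_connB4 ht hn).2

end Construction

/-- For `n = 4p` with `p` an odd prime, the circulant multigraphs with connection
multisets `Ã = A ⊎ (−A)` and `B̃ = B ⊎ (−B)` are isospectral but not isomorphic. -/
theorem symmetrized_construction_n4p (p : ℕ) (hp : p.Prime) (hodd : Odd p)
    (n : ℕ) [NeZero n] (hn : n = 4 * p) :
    (circulantAdj n
        ((connA4 n p).val + (connA4 n p).val.map fun a => -a)).charpoly =
      (circulantAdj n
        ((connB4 n p).val + (connB4 n p).val.map fun b => -b)).charpoly ∧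
    ¬ ∃ e : Equiv.Perm (ZMod n),
        circulantAdj n ((connB4 n p).val + (connB4 n p).val.map fun b => -b) =
          (circulantAdj n
            ((connA4 n p).val + (connA4 n p).val.map fun a => -a)).submatrix e e := by
  obtain ⟨t, rfl⟩ := hodd
  have ht : 1 ≤ t := by have := hp.two_le; omega
  exact ⟨charpoly_symmetrize_connA4_eq_connB4 hn, not_exists_perm_symmetrize_connB4_connA4 ht hn⟩
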